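/- arXiv:1504.01976 — 3 statements merged into one kernel-verified Lean document; each statement's English description precedes it below -/
import Mathlib

section
/- For every prime p > 3, the product of (p + 2k) for k = 1 to p-1 is congruent to (-1)^((p-1)/2) times the product of (2k-1)^2 for k = 1 to (p-1)/2, modulo p^3. -/
/-!
Write `p = 2m + 1`. Pairing `k` with `p - k` turns the left side into
`∏_{i<m} ((2p)² - (2i+1)²) = (-1)^m ∏_{i<m} (a_i + c)` with `a_i = (2i+1)²` and `c = -4p²`.
Modulo `c²`, hence modulo `p³`, this product is `∏ a_i + c ∑_j ∏_{i≠j} a_i`, so it remains to see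
that `p` divides `∑_j ∏_{i≠j} a_i = ∏ a_i · ∑_j a_j⁻¹` (in `ZMod p`). As `±(2i+1)` run over all
nonzero residues, `2 ∑_j a_j⁻¹ = ∑_x x⁻² = ∑_x x² = 0` because `2 < p - 1`.
-/

open Finset

theorem prod_Icc_one_eq_prod_range {M : Type*} [CommMonoid M] (f : ℕ → M) (n : ℕ) :
    ∏ k ∈ Icc 1 n, f k = ∏ i ∈ range n, f (i + 1) := by
  rw [← Ico_add_one_right_eq_Icc, prod_Ico_eq_prod_range, Nat.add_sub_cancel]
  simp only [add_comm 1]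

theorem sum_range_two_mul {M : Type*} [AddCommMonoid M] (f : ℕ → M) (n : ℕ) :
    ∑ k ∈ range (2 * n), f k = ∑ i ∈ range n, f (2 * i) + ∑ i ∈ range n, f (2 * i + 1) := by
  induction n with
  | zero => simp
  | succ n ih =>
    rw [Nat.mul_succ, sum_range_succ, sum_range_succ, sum_range_succ, sum_range_succ, ih]
    abel

theorem prod_Icc_add_two_mul {R : Type*} [CommRing R] (x : R) (m : ℕ) :
    ∏ k ∈ Icc 1 (2 * m), (x + 2 * k) = ∏ i ∈ range m, ((x + 2 * m + 1) ^ 2 - (2 * i + 1) ^ 2) := by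
  rw [prod_Icc_one_eq_prod_range, two_mul, prod_range_add, ← prod_range_reflect _ m,
    ← prod_mul_distrib]
  refine prod_congr rfl fun i hi => ?_
  have hi : i + 1 ≤ m := mem_range.mp hi
  rw [show m - 1 - i + 1 = m - i by omega, Nat.cast_sub (by omega)]
  push_cast
  ring

theorem sq_dvd_prod_add_sub_prod_sub_mul_sum_prod_erase {ι R : Type*} [CommRing R] [DecidableEq ι]
    (s : Finset ι) (a : ι → R) (c : R) :
    c ^ 2 ∣ ∏ i ∈ s, (a i + c) - ∏ i ∈ s, a i - c * ∑ j ∈ s, ∏ i ∈ s.erase j, a i := by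
  induction s using Finset.induction_on with
  | empty => simp
  | @insert x s hx ih =>
    have herase : ∀ j ∈ s, ∏ i ∈ (insert x s).erase j, a i = a x * ∏ i ∈ s.erase j, a i :=
      fun j hj => by
        rw [erase_insert_of_ne (by rintro rfl; exact hx hj),
          prod_insert (fun h => hx (mem_of_mem_erase h))]
    rw [prod_insert hx, prod_insert hx, sum_insert hx, erase_insert hx, sum_congr rfl herase,
      ← mul_sum]
    obtain ⟨d, hd⟩ := ih
    refine ⟨(a x + c) * d + ∑ j ∈ s, ∏ i ∈ s.erase j, a i, ?_⟩
    linear_combination (a x + c) * hd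

theorem sum_prod_erase_eq_prod_mul_sum_inv {ι K : Type*} [Field K] [DecidableEq ι]
    (s : Finset ι) (b : ι → K) (hb : ∀ i ∈ s, b i ≠ 0) :
    ∑ j ∈ s, ∏ i ∈ s.erase j, b i = (∏ i ∈ s, b i) * ∑ j ∈ s, (b j)⁻¹ := by
  rw [mul_sum]
  refine sum_congr rfl fun j hj => ?_
  rw [eq_mul_inv_iff_mul_eq₀ (hb j hj), prod_erase_mul _ _ hj]

theorem ZMod.sum_univ_eq_sum_range {M : Type*} [AddCommMonoid M] (n : ℕ) [NeZero n]
    (f : ZMod n → M) : ∑ x, f x = ∑ k ∈ range n, f k :=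
  sum_nbij' ZMod.val Nat.cast (fun x _ => mem_range.mpr (ZMod.val_lt x)) (fun _ _ => mem_univ _)
    (fun x _ => ZMod.natCast_zmod_val x) (fun _ hk => ZMod.val_cast_of_lt (mem_range.mp hk))
    (fun x _ => by rw [ZMod.natCast_zmod_val])

/-- The residues `±(2i + 1)`, `i < n / 2`, are exactly the nonzero classes modulo an odd `n`. -/
theorem ZMod.sum_eq_add_two_nsmul_sum_odd {M : Type*} [AddCommMonoid M] {n : ℕ} [NeZero n]
    (hn : Odd n) (f : ZMod n → M) (hf : ∀ x, f (-x) = f x) :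
    ∑ x, f x = f 0 + 2 • ∑ i ∈ range (n / 2), f (2 * i + 1) := by
  obtain ⟨m, rfl⟩ := hn
  have heven : ∑ i ∈ range m, f ((2 * i + 1 + 1 : ℕ)) = ∑ i ∈ range m, f (2 * i + 1) := by
    rw [← sum_range_reflect]
    refine sum_congr rfl fun i hi => ?_
    have hi : i + 1 ≤ m := mem_range.mp hi
    rw [← hf]
    congr 1
    rw [neg_eq_iff_add_eq_zero, ← ZMod.natCast_self (2 * m + 1)]
    exact_mod_cast congrArg Nat.cast
      (show 2 * (m - 1 - i) + 1 + 1 + (2 * i + 1) = 2 * m + 1 by omega)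
  rw [show (2 * m + 1) / 2 = m by omega, ZMod.sum_univ_eq_sum_range, sum_range_succ',
    sum_range_two_mul, heven, two_nsmul]
  push_cast
  abel

theorem ZMod.sum_inv_sq_odd_eq_zero (p : ℕ) [Fact p.Prime] (hp : 3 < p) :
    ∑ i ∈ range (p / 2), ((2 * i + 1 : ZMod p)⁻¹) ^ 2 = 0 := by
  have hodd : Odd p := (Fact.out : p.Prime).odd_of_ne_two (by omega)
  have hsum : ∑ x : ZMod p, (x⁻¹) ^ 2 = 0 :=
    (Equiv.sum_comp (Equiv.inv _) (· ^ 2)).trans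
      (FiniteField.sum_pow_lt_card_sub_one _ 2 (by rw [ZMod.card]; omega))
  have htwo : (2 : ZMod p) ≠ 0 := by
    rw [← Nat.cast_two, Ne, ZMod.natCast_eq_zero_iff]
    exact fun h => by have := Nat.le_of_dvd two_pos h; omega
  rw [ZMod.sum_eq_add_two_nsmul_sum_odd hodd _ (by simp), inv_zero, zero_pow two_ne_zero,
    zero_add, nsmul_eq_mul] at hsum
  exact (mul_eq_zero.mp hsum).resolve_left htwo

theorem Nat.Prime.dvd_sum_prod_erase_odd_sq {p : ℕ} (hp : p.Prime) (h3 : 3 < p) :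
    (p : ℤ) ∣ ∑ j ∈ range (p / 2), ∏ i ∈ (range (p / 2)).erase j, (2 * (i : ℤ) + 1) ^ 2 := by
  have := Fact.mk hp
  have hne : ∀ i ∈ range (p / 2), (2 * i + 1 : ZMod p) ^ 2 ≠ 0 := fun i hi => by
    have hi : i < p / 2 := mem_range.mp hi
    refine pow_ne_zero 2 ?_
    rw [← Nat.cast_ofNat, ← Nat.cast_mul, ← Nat.cast_succ, Ne, ZMod.natCast_eq_zero_iff]
    exact fun h => by have := Nat.le_of_dvd (by omega) h; omega
  rw [← ZMod.intCast_zmod_eq_zero_iff_dvd]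
  push_cast
  rw [sum_prod_erase_eq_prod_mul_sum_inv _ _ hne]
  simp only [← inv_pow]
  rw [ZMod.sum_inv_sq_odd_eq_zero p h3, mul_zero]

theorem prod_p_add_two_mul_congr (p : ℕ) (hp : p.Prime) (h3 : 3 < p) :
    (∏ k ∈ Finset.Icc 1 (p - 1), ((p : ℤ) + 2 * k)) ≡
      (-1) ^ ((p - 1) / 2) * ∏ k ∈ Finset.Icc 1 ((p - 1) / 2), ((2 * (k : ℤ) - 1)) ^ 2
        [ZMOD (p : ℤ)^3] := by
  have hodd : p % 2 = 1 := Nat.odd_iff.mp (hp.odd_of_ne_two (by omega))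
  set m := p / 2
  have hpm : p = 2 * m + 1 := by omega
  have hLHS : ∏ k ∈ Icc 1 (p - 1), ((p : ℤ) + 2 * k) =
      (-1) ^ m * ∏ i ∈ range m, ((2 * (i : ℤ) + 1) ^ 2 + -(2 * (p : ℤ)) ^ 2) := by
    have hneg := prod_neg (s := range m) fun i => (2 * (i : ℤ) + 1) ^ 2 + -(2 * (p : ℤ)) ^ 2
    rw [card_range] at hneg
    rw [show p - 1 = 2 * m by omega, prod_Icc_add_two_mul, ← hneg]
    refine prod_congr rfl fun i _ => ?_
    rw [hpm]
    push_cast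
    ring
  have hRHS : ∏ k ∈ Icc 1 m, (2 * (k : ℤ) - 1) ^ 2 = ∏ i ∈ range m, (2 * (i : ℤ) + 1) ^ 2 := by
    rw [prod_Icc_one_eq_prod_range]
    refine prod_congr rfl fun i _ => ?_
    push_cast
    ring
  rw [hLHS, show (p - 1) / 2 = m by omega, hRHS]
  refine Int.ModEq.mul_left _ (Int.ModEq.symm (Int.modEq_iff_dvd.mpr ?_))
  obtain ⟨d, hd⟩ := sq_dvd_prod_add_sub_prod_sub_mul_sum_prod_erase (range m)
    (fun i => (2 * (i : ℤ) + 1) ^ 2) (-(2 * (p : ℤ)) ^ 2)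
  obtain ⟨t, ht⟩ : (p : ℤ) ∣ ∑ j ∈ range m, ∏ i ∈ (range m).erase j, (2 * (i : ℤ) + 1) ^ 2 :=
    hp.dvd_sum_prod_erase_odd_sq h3
  exact ⟨16 * p * d - 4 * t, by linear_combination hd - 4 * (p : ℤ) ^ 2 * ht⟩
end

section
/- For every prime p > 3, the sum over n = 1 to p-1 of (1 - p/2)_{n-1}^2 / (n! * (1 - 3p/2)_{n-1}) is congruent to 0 modulo p^2 (as a rational number, i.e., its p-adic valuation is at least 2). -/
open Finset

/-- Pochhammer symbol `(a)_m` for rational `a` and integer `m`: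
`(a)_m = a(a+1)⋯(a+m-1)` for `m ≥ 0`, and `(a)_{-m} = ∏_{j=1}^m 1/(a-j)`. -/
noncomputable def poch (a : ℚ) (m : ℤ) : ℚ :=
  if 0 ≤ m then ∏ i ∈ Finset.range m.toNat, (a + i)
  else ∏ j ∈ Finset.range (-m).toNat, 1 / (a - (j + 1))

/-!
Write `m = n - 1`, `ε = p / 2` and `h_m = ∑_{k=1}^{m} 1/k`. Modulo `p²` one has
`(1 - ε)_m ≡ m! (1 - ε h_m)` and `(1 - 3ε)_m ≡ m! (1 - 3ε h_m)`, so the `n`-th summand is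
`≡ (1 - ε h_m)² / (n (1 - 3ε h_m)) ≡ (1 + ε h_m) / n`. Summing over `n`, the main part is
the harmonic number `H_{p-1}`, which vanishes modulo `p²` by Wolstenholme's theorem, and the
correction is `ε ∑_{j<k} 1/(jk) = ε (H_{p-1}² - ∑ 1/k²) / 2`, where both sums vanish modulo `p`
for `p > 3`. All summands are `p`-integral, so the congruences are computed in `ℤ_[p]` reduced
to `ZMod (p²)`.
-/

theorem poch_natCast (a : ℚ) (m : ℕ) : poch a m = ∏ i ∈ range m, (a + i) := by
  simp [poch]

theorem sum_Icc_one_eq_sum_range {M : Type*} [AddCommMonoid M] (f : ℕ → M) (n : ℕ) :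
    ∑ k ∈ Icc 1 n, f k = ∑ m ∈ range n, f (m + 1) := by
  rw [← Ico_add_one_right_eq_Icc, sum_Ico_eq_sum_range]
  exact sum_congr (by simp) fun m _ => by rw [add_comm]

theorem sq_sum_range {R : Type*} [CommRing R] (f : ℕ → R) (n : ℕ) :
    (∑ i ∈ range n, f i) ^ 2 =
      ∑ i ∈ range n, f i ^ 2 + 2 * ∑ i ∈ range n, (∑ j ∈ range i, f j) * f i := by
  induction n with
  | zero => simp
  | succ n ih => simp only [sum_range_succ]; linear_combination ih

theorem prod_one_add_mul_of_sq_eq_zero {R ι : Type*} [CommRing R] {ε : R} (hε : ε ^ 2 = 0)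
    (s : Finset ι) (a : ι → R) : ∏ i ∈ s, (1 + ε * a i) = 1 + ε * ∑ i ∈ s, a i := by
  classical
  induction s using Finset.induction_on with
  | empty => simp
  | insert i s hi ih =>
    rw [prod_insert hi, sum_insert hi, ih]
    linear_combination (a i * ∑ j ∈ s, a j) * hε

theorem prod_sub_mul_of_sq_eq_zero {R ι : Type*} [CommRing R] {δ : R} (hδ : δ ^ 2 = 0)
    {s : Finset ι} {c v : ι → R} (hcv : ∀ i ∈ s, c i * v i = 1) (t : R) :
    ∏ i ∈ s, (c i - t * δ) = (∏ i ∈ s, c i) * (1 - t * δ * ∑ i ∈ s, v i) := by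
  have hfactor : ∀ i ∈ s, c i - t * δ = c i * (1 + δ * (-t * v i)) := fun i hi => by
    linear_combination t * δ * hcv i hi
  rw [prod_congr rfl hfactor, prod_mul_distrib, prod_one_add_mul_of_sq_eq_zero hδ, ← mul_sum]
  ring

/-- With `c i = i + 1`, `v i = (i + 1)⁻¹` and `δ = p / 2` the products are `m!`, `(1 - p/2)_m`
and `(1 - 3p/2)_m`. -/
theorem sq_prod_sub_eq_of_sq_eq_zero {R : Type*} [CommRing R] {δ : R} (hδ : δ ^ 2 = 0)
    {c v : ℕ → R} {m : ℕ} (hcv : ∀ i ≤ m, c i * v i = 1) :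
    (1 + δ * ∑ i ∈ range m, v i) * v m *
        (c m * (∏ i ∈ range m, c i) * ∏ i ∈ range m, (c i - 3 * δ)) =
      (∏ i ∈ range m, (c i - δ)) ^ 2 := by
  have hcv' : ∀ i ∈ range m, c i * v i = 1 := fun i hi => hcv i (mem_range.1 hi).le
  have h1 := prod_sub_mul_of_sq_eq_zero hδ hcv' 1
  simp only [one_mul] at h1
  rw [h1, prod_sub_mul_of_sq_eq_zero hδ hcv']
  linear_combination (∏ i ∈ range m, c i) ^ 2 * (1 + δ * ∑ i ∈ range m, v i) *
      (1 - 3 * δ * ∑ i ∈ range m, v i) * hcv m le_rfl -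
    4 * (∏ i ∈ range m, c i) ^ 2 * (∑ i ∈ range m, v i) ^ 2 * hδ

namespace ZMod

theorem sum_range_natCast {M : Type*} [AddCommMonoid M] (n : ℕ) [NeZero n] (g : ZMod n → M) :
    ∑ k ∈ range n, g k = ∑ x, g x :=
  sum_nbij' (↑) val (fun _ _ => mem_univ _) (fun x _ => mem_range.2 x.val_lt)
    (fun _ hk => val_cast_of_lt (mem_range.1 hk)) (fun x _ => natCast_zmod_val x) (fun _ _ => rfl)

variable {p : ℕ} [hp : Fact p.Prime]

theorem natCast_add_one_ne_zero {k : ℕ} (hk : k + 1 < p) : (k : ZMod p) + 1 ≠ 0 := by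
  rw [← Nat.cast_add_one, Ne, natCast_eq_zero_iff]
  exact Nat.not_dvd_of_pos_of_lt k.succ_pos hk

theorem sum_range_inv_pow_eq_zero {j : ℕ} (hj0 : 0 < j) (hj : j < p - 1) :
    ∑ k ∈ range (p - 1), ((k : ZMod p) + 1)⁻¹ ^ j = 0 := by
  calc ∑ k ∈ range (p - 1), ((k : ZMod p) + 1)⁻¹ ^ j
      = ∑ k ∈ range p, ((k : ZMod p)⁻¹) ^ j := by
        have h := sum_range_succ' (fun k => ((k : ZMod p))⁻¹ ^ j) (p - 1)
        rw [Nat.sub_add_cancel hp.out.one_le] at h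
        rw [h, Nat.cast_zero, inv_zero, zero_pow hj0.ne', add_zero]
        push_cast; rfl
    _ = ∑ x : ZMod p, x⁻¹ ^ j := sum_range_natCast p (fun x => x⁻¹ ^ j)
    _ = ∑ x : ZMod p, x ^ j := Fintype.sum_equiv (Equiv.inv _) _ _ fun _ => rfl
    _ = 0 := FiniteField.sum_pow_lt_card_sub_one _ _ (by rwa [ZMod.card])

theorem sum_range_sum_inv_mul_inv_eq_zero (hp3 : 3 < p) :
    ∑ m ∈ range (p - 1), (∑ k ∈ range m, ((k : ZMod p) + 1)⁻¹) * ((m : ZMod p) + 1)⁻¹ = 0 := by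
  have h2 : (2 : ZMod p) ≠ 0 := by exact_mod_cast natCast_add_one_ne_zero (k := 1) (by omega)
  have hsq := sq_sum_range (fun k => ((k : ZMod p) + 1)⁻¹) (p - 1)
  have h1 := sum_range_inv_pow_eq_zero (p := p) one_pos (by omega)
  simp only [pow_one] at h1
  rw [h1, sum_range_inv_pow_eq_zero two_pos (by omega)] at hsq
  simpa [h2] using hsq.symm

theorem natCast_add_one_mul_inv {n k : ℕ} (hk : k + 1 < p) :
    ((k : ZMod (p ^ n)) + 1) * ((k : ZMod (p ^ n)) + 1)⁻¹ = 1 := by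
  have hcop : Nat.Coprime (k + 1) (p ^ n) :=
    Nat.Coprime.pow_right n <| (Nat.coprime_comm.1 <|
      (Nat.Prime.coprime_iff_not_dvd hp.out).2 (Nat.not_dvd_of_pos_of_lt k.succ_pos hk))
  exact_mod_cast coe_mul_inv_eq_one (k + 1) hcop

abbrev reduceSq : ZMod (p ^ 2) →+* ZMod p := castHom (dvd_pow_self p two_ne_zero) (ZMod p)

theorem reduceSq_inv_natCast_add_one {k : ℕ} (hk : k + 1 < p) :
    reduceSq (((k : ZMod (p ^ 2)) + 1)⁻¹) = ((k : ZMod p) + 1)⁻¹ := by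
  refine eq_inv_of_mul_eq_one_left ?_
  simpa [mul_comm] using congrArg reduceSq (natCast_add_one_mul_inv (n := 2) hk)

theorem natCast_self_mul_eq_zero_of_reduceSq {y : ZMod (p ^ 2)} (hy : reduceSq y = 0) :
    (p : ZMod (p ^ 2)) * y = 0 := by
  have : NeZero (p ^ 2) := ⟨pow_ne_zero 2 hp.out.ne_zero⟩
  rw [← natCast_zmod_val y, map_natCast, natCast_eq_zero_iff] at hy
  obtain ⟨c, hc⟩ := hy
  rw [← natCast_zmod_val y, ← Nat.cast_mul, natCast_eq_zero_iff, hc]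
  exact ⟨c, by ring⟩

/-- Pairing `k` with `p - k`, where `(p - k)⁻¹ = -(k⁻¹ + p k⁻²)` modulo `p²`, gives
`2 H_{p-1} = -p ∑ k⁻²`, and `∑ k⁻² ≡ 0 (mod p)`. -/
theorem wolstenholme (hp3 : 3 < p) :
    ∑ k ∈ range (p - 1), ((k : ZMod (p ^ 2)) + 1)⁻¹ = 0 := by
  set ε : ZMod (p ^ 2) := (p : ZMod (p ^ 2))
  have hε : ε ^ 2 = 0 := by rw [← Nat.cast_pow, natCast_self]
  set v : ℕ → ZMod (p ^ 2) := fun k => ((k : ZMod (p ^ 2)) + 1)⁻¹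
  have hreflect : ∀ k ∈ range (p - 1), v (p - 1 - 1 - k) = -(v k + ε * v k ^ 2) := by
    intro k hk
    have hk' := mem_range.1 hk
    refine ZMod.inv_eq_of_mul_eq_one _ _ _ ?_
    have hsub : ((p - 1 - 1 - k : ℕ) : ZMod (p ^ 2)) + 1 = ε - ((k : ZMod (p ^ 2)) + 1) := by
      rw [← Nat.cast_add_one, show p - 1 - 1 - k + 1 = p - (k + 1) by omega,
        Nat.cast_sub (by omega)]
      push_cast; ring
    rw [hsub]
    linear_combination (1 + ε * v k) * natCast_add_one_mul_inv (n := 2) (by omega : k + 1 < p) -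
      v k ^ 2 * hε
  have hsq : ε * ∑ k ∈ range (p - 1), v k ^ 2 = 0 := by
    refine natCast_self_mul_eq_zero_of_reduceSq ?_
    rw [map_sum, ← sum_range_inv_pow_eq_zero (p := p) two_pos (by omega)]
    refine sum_congr rfl fun k hk => ?_
    rw [map_pow, reduceSq_inv_natCast_add_one (by have := mem_range.1 hk; omega)]
  have h2 : (2 : ZMod (p ^ 2)) * ∑ k ∈ range (p - 1), v k = 0 := by
    have h := sum_range_reflect v (p - 1)
    rw [sum_congr rfl hreflect, sum_neg_distrib, sum_add_distrib, ← mul_sum, hsq] at h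
    linear_combination -h
  have h2unit : IsUnit (2 : ZMod (p ^ 2)) := by
    have := natCast_add_one_mul_inv (n := 2) (k := 1) (p := p) (by omega)
    exact IsUnit.of_mul_eq_one _ (by exact_mod_cast this)
  exact h2unit.mul_right_eq_zero.1 h2

theorem sum_range_one_add_mul_sum_inv_mul_inv_eq_zero (hp3 : 3 < p) (w : ZMod (p ^ 2)) :
    ∑ m ∈ range (p - 1),
      (1 + (p : ZMod (p ^ 2)) * w * ∑ k ∈ range m, ((k : ZMod (p ^ 2)) + 1)⁻¹) *
        ((m : ZMod (p ^ 2)) + 1)⁻¹ = 0 := by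
  have hcorrection : (p : ZMod (p ^ 2)) * ∑ m ∈ range (p - 1),
      (∑ k ∈ range m, ((k : ZMod (p ^ 2)) + 1)⁻¹) * ((m : ZMod (p ^ 2)) + 1)⁻¹ = 0 := by
    refine natCast_self_mul_eq_zero_of_reduceSq ?_
    rw [← sum_range_sum_inv_mul_inv_eq_zero hp3, map_sum]
    refine sum_congr rfl fun m hm => ?_
    have hm := mem_range.1 hm
    rw [map_mul, map_sum, reduceSq_inv_natCast_add_one (by omega)]
    congr 1
    exact sum_congr rfl fun k hk => reduceSq_inv_natCast_add_one (by have := mem_range.1 hk; omega)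
  simp only [add_mul, one_mul, sum_add_distrib, mul_assoc, ← mul_sum]
  rw [wolstenholme hp3, mul_left_comm, hcorrection, mul_zero, add_zero]

end ZMod

namespace PadicInt

variable {p : ℕ} [Fact p.Prime]

@[simp, norm_cast]
theorem coe_prod {α : Type*} (s : Finset α) (f : α → ℤ_[p]) :
    (((∏ z ∈ s, f z) : ℤ_[p]) : ℚ_[p]) = ∏ z ∈ s, (f z : ℚ_[p]) :=
  map_prod Coe.ringHom f s

@[simp, norm_cast]
theorem coe_ofNat (n : ℕ) [n.AtLeastTwo] : ((ofNat(n) : ℤ_[p]) : ℚ_[p]) = ofNat(n) :=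
  map_ofNat Coe.ringHom n

theorem isUnit_iff_toZMod_ne_zero {x : ℤ_[p]} : IsUnit x ↔ toZMod x ≠ 0 := by
  rw [← IsLocalRing.notMem_maximalIdeal, ← ker_toZMod, RingHom.mem_ker]

theorem exists_coe_eq_div {a b : ℤ_[p]} (hb : IsUnit b) (n : ℕ) :
    ∃ z : ℤ_[p], (z : ℚ_[p]) = a / b ∧ toZModPow n z * toZModPow n b = toZModPow n a := by
  obtain ⟨u, rfl⟩ := hb
  refine ⟨a * ↑u⁻¹, ?_, by rw [← map_mul, mul_assoc, Units.inv_mul, mul_one]⟩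
  have hu : ((u : ℤ_[p]) : ℚ_[p]) ≠ 0 := by simp
  rw [eq_div_iff hu, ← coe_mul, mul_assoc, Units.inv_mul, mul_one]

theorem padicValRat_ge_of_toZModPow_eq_zero {q : ℚ} {z : ℤ_[p]} {n : ℕ}
    (hq : (q : ℚ_[p]) = z) (hz : toZModPow n z = 0) : q = 0 ∨ (n : ℤ) ≤ padicValRat p q := by
  refine or_iff_not_imp_left.2 fun hq0 => ?_
  have hnorm := (norm_le_pow_iff_mem_span_pow z n).2 (ker_toZModPow (p := p) n ▸ hz)
  rw [norm_def, ← hq, Padic.eq_padicNorm, padicNorm.eq_zpow_of_nonzero hq0] at hnorm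
  push_cast at hnorm
  have hp1 : (1 : ℝ) < p := by exact_mod_cast (Fact.out : p.Prime).one_lt
  exact neg_le_neg_iff.1 ((zpow_le_zpow_iff_right₀ hp1).1 hnorm)

theorem exists_eq_poch_ratio {w : ℤ_[p]} (hw : 2 * w = 1) {m : ℕ} (hm : m + 1 < p) :
    ∃ z : ℤ_[p], ((poch (1 - (p : ℚ) / 2) m ^ 2 /
        ((m + 1).factorial * poch (1 - 3 * (p : ℚ) / 2) m) : ℚ) : ℚ_[p]) = z ∧
      toZModPow 2 z = (1 + (p : ZMod (p ^ 2)) * toZModPow 2 w *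
        ∑ k ∈ range m, ((k : ZMod (p ^ 2)) + 1)⁻¹) * ((m : ZMod (p ^ 2)) + 1)⁻¹ := by
  set a : ℤ_[p] := (∏ i ∈ range m, ((i : ℤ_[p]) + 1 - p * w)) ^ 2
  set b : ℤ_[p] :=
    ((m + 1).factorial : ℤ_[p]) * ∏ i ∈ range m, ((i : ℤ_[p]) + 1 - 3 * (p * w))
  have hb : IsUnit b := by
    rw [isUnit_iff_toZMod_ne_zero]
    simp only [b, map_mul, map_prod, map_sub, map_add, map_natCast, map_one, map_ofNat,
      ZMod.natCast_self, zero_mul, mul_zero, sub_zero]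
    refine mul_ne_zero ?_ (prod_ne_zero_iff.2 fun i hi =>
      ZMod.natCast_add_one_ne_zero (by have := mem_range.1 hi; omega))
    rw [Ne, ZMod.natCast_eq_zero_iff, (Fact.out : p.Prime).dvd_factorial]
    omega
  obtain ⟨z, hz, hzb⟩ := exists_coe_eq_div (a := a) hb 2
  refine ⟨z, ?_, (hb.map (toZModPow 2)).mul_right_cancel ?_⟩
  · have hw' : (w : ℚ_[p]) = 2⁻¹ :=
      eq_inv_of_mul_eq_one_right (by exact_mod_cast congrArg ((↑) : ℤ_[p] → ℚ_[p]) hw)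
    rw [hz, poch_natCast, poch_natCast]
    push_cast [a, b, hw']
    congr 2 <;> refine prod_congr rfl fun i _ => by ring
  · have hfact : (((m + 1).factorial : ℕ) : ZMod (p ^ 2)) =
        ((m : ZMod (p ^ 2)) + 1) * ∏ i ∈ range m, ((i : ZMod (p ^ 2)) + 1) := by
      rw [Nat.factorial_succ, ← prod_range_add_one_eq_factorial]; push_cast; rfl
    have hδ : ((p : ZMod (p ^ 2)) * toZModPow 2 w) ^ 2 = 0 := by
      rw [mul_pow, ← Nat.cast_pow, ZMod.natCast_self, zero_mul]
    rw [hzb]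
    simp only [a, b, map_mul, map_prod, map_sub, map_add, map_natCast, map_one, map_ofNat,
      map_pow, hfact]
    exact (sq_prod_sub_eq_of_sq_eq_zero hδ fun i hi =>
      ZMod.natCast_add_one_mul_inv (by omega)).symm

end PadicInt

theorem sum_poch_ratio_padicVal (p : ℕ) (hp : p.Prime) (h3 : 3 < p) :
    (∑ n ∈ Finset.Icc 1 (p - 1),
        (poch (1 - (p : ℚ)/2) ((n : ℤ) - 1))^2 /
          ((n.factorial : ℚ) * poch (1 - 3*(p : ℚ)/2) ((n : ℤ) - 1))) = 0 ∨
      (2 : ℤ) ≤ padicValRat p (∑ n ∈ Finset.Icc 1 (p - 1),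
        (poch (1 - (p : ℚ)/2) ((n : ℤ) - 1))^2 /
          ((n.factorial : ℚ) * poch (1 - 3*(p : ℚ)/2) ((n : ℤ) - 1))) := by
  have : Fact p.Prime := ⟨hp⟩
  obtain ⟨w, hw⟩ : ∃ w : ℤ_[p], 2 * w = 1 := by
    obtain ⟨u, hu⟩ := (PadicInt.isUnit_iff_toZMod_ne_zero (p := p) (x := 2)).2 (by
      rw [map_ofNat]
      exact_mod_cast ZMod.natCast_add_one_ne_zero (p := p) (k := 1) (by omega))
    exact ⟨(u⁻¹ : ℤ_[p]ˣ), by rw [← hu, Units.mul_inv]⟩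
  choose! z hz hzmod using fun (m : ℕ) (hm : m ∈ range (p - 1)) =>
    PadicInt.exists_eq_poch_ratio (m := m) hw (by have := mem_range.1 hm; omega)
  refine PadicInt.padicValRat_ge_of_toZModPow_eq_zero (z := ∑ m ∈ range (p - 1), z m) ?_ ?_
  · rw [PadicInt.coe_sum, sum_Icc_one_eq_sum_range, Rat.cast_sum]
    refine sum_congr rfl fun m hm => ?_
    rw [← hz m hm, Nat.cast_succ, add_sub_cancel_right]
  · rw [map_sum, sum_congr rfl hzmod]
    exact ZMod.sum_range_one_add_mul_sum_inv_mul_inv_eq_zero h3 _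
end

section
/- Define F(n,k) = (84n^2 - 56nk + 4k^2 + 52n - 12k + 5) * (-1)^k * (1/2)_n * (1/2)_{n+k} * (1/2)_{n-k}^2 / (2^{4n} * (1)_n^2 * (1)_{2n-k+1}) and G(n,k) = 64n^2 * (-1)^k * (1/2)_n * (1/2)_{n+k-1} * (1/2)_{n-k}^2 / (2^{4n} * (1)_n^2 * (1)_{2n-k}). Then F(n,k-1) - F(n,k) = G(n+1,k) - G(n,k) for all integers n >= 0 and k with 2n - k + 1 >= 0 (interpreting terms with negative Pochhammer index of (1) as zero). -/
open Finset

/-- Guillera's WZ-pair function `F`. -/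
noncomputable def F (n k : ℤ) : ℚ :=
  ((84*n^2 - 56*n*k + 4*k^2 + 52*n - 12*k + 5 : ℤ) : ℚ) * (-1 : ℚ)^k *
    poch (1/2) n * poch (1/2) (n + k) * (poch (1/2) (n - k))^2 /
      ((2 : ℚ)^(4*n) * (poch 1 n)^2 * poch 1 (2*n - k + 1))

/-- Guillera's WZ-pair function `G`. -/
noncomputable def G (n k : ℤ) : ℚ :=
  (64 : ℚ) * (n : ℚ)^2 * (-1 : ℚ)^k *
    poch (1/2) n * poch (1/2) (n + k - 1) * (poch (1/2) (n - k))^2 /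
      ((2 : ℚ)^(4*n) * (poch 1 n)^2 * poch 1 (2*n - k))

/-!
Every Pochhammer symbol is reduced to a common hypergeometric term. The shift
`(1/2)_{m+1} = (1/2)_m (m + 1/2)` holds for every integer `m`, and so does
`1/(1)_m = (m + 1)/(1)_{m+1}` under the convention `1/(1)_m = 0` for `m < 0` (at `m = -1` both
sides vanish, which absorbs the boundary case `k = 2n + 1`). After these substitutions all four
terms are polynomials in `n, k` times
`(-1)^k (1/2)_n (1/2)_{n+k-1} (1/2)_{n-k}^2 / (2^{4n} (1)_{n+1}^2 (1)_{2n-k+2})`,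
and the relation becomes a polynomial identity.
-/

lemma poch_of_nonneg (a : ℚ) {m : ℤ} (hm : 0 ≤ m) :
    poch a m = ∏ i ∈ range m.toNat, (a + i) :=
  if_pos hm

lemma poch_of_neg (a : ℚ) {m : ℤ} (hm : m < 0) :
    poch a m = ∏ j ∈ range (-m).toNat, 1 / (a - (j + 1)) :=
  if_neg hm.not_ge

lemma poch_add_one (a : ℚ) (m : ℤ) (ha : a + m ≠ 0) :
    poch a (m + 1) = poch a m * (a + m) := by
  rcases le_or_gt 0 m with hm | hm
  · rw [poch_of_nonneg a hm, poch_of_nonneg a (by omega),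
      show (m + 1).toNat = m.toNat + 1 by omega, prod_range_succ,
      show ((m.toNat : ℕ) : ℚ) = m by exact_mod_cast Int.toNat_of_nonneg hm]
  · rcases (by omega : m = -1 ∨ m + 1 < 0) with rfl | hm'
    · push_cast at ha ⊢
      rw [← sub_eq_add_neg] at ha ⊢
      simp [poch_of_nonneg, poch_of_neg, inv_mul_cancel₀ ha]
    · rw [poch_of_neg a hm, poch_of_neg a hm',
        show (-m).toNat = (-(m + 1)).toNat + 1 by omega, prod_range_succ, mul_assoc]
      have hlast : ((-(m + 1)).toNat : ℤ) = -m - 1 := by omega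
      rw [show (((-(m + 1)).toNat : ℕ) : ℚ) = -m - 1 by exact_mod_cast hlast,
        show a - (-(m : ℚ) - 1 + 1) = a + m by ring, one_div, inv_mul_cancel₀ ha, mul_one]

lemma poch_half_add_one (m : ℤ) : poch (1/2) (m + 1) = poch (1/2) m * (1/2 + m) := by
  refine poch_add_one _ m fun h => ?_
  have : ((2 * m + 1 : ℤ) : ℚ) = 0 := by push_cast; linarith
  have : 2 * m + 1 = 0 := by exact_mod_cast this
  omega

lemma poch_one_of_neg {m : ℤ} (hm : m < 0) : poch 1 m = 0 :=
  (poch_of_neg 1 hm).trans <| prod_eq_zero (i := 0) (mem_range.2 (by omega)) (by norm_num)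

lemma inv_poch_one_eq (m : ℤ) : (poch 1 m)⁻¹ = (poch 1 (m + 1))⁻¹ * (m + 1) := by
  rcases le_or_gt 0 m with hm | hm
  · have hm1 : (m : ℚ) + 1 ≠ 0 := by positivity
    rw [poch_add_one 1 m (by rwa [add_comm]), add_comm 1 (m : ℚ), mul_inv, mul_assoc,
      inv_mul_cancel₀ hm1, mul_one]
  · rw [poch_one_of_neg hm, inv_zero]
    rcases (by omega : m = -1 ∨ m + 1 < 0) with rfl | hm'
    · norm_num
    · rw [poch_one_of_neg hm', inv_zero, zero_mul]

theorem wz_pair_relation_general (n k : ℤ) :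
    F n (k - 1) - F n k = G (n + 1) k - G n k := by
  have sign : (-1 : ℚ) ^ (k - 1) = -(-1) ^ k := by
    rw [zpow_sub_one₀ (by norm_num)]; norm_num
  have pow : (2 : ℚ) ^ (4 * (n + 1)) = 2 ^ (4 * n) * 16 := by
    rw [mul_add, zpow_add₀ (by norm_num)]; norm_num
  have shift : poch (1/2) (n + k) = poch (1/2) (n + k - 1 + 1) := by rw [sub_add_cancel]
  simp only [F, G]
  rw [sign, pow, shift, ← add_sub_assoc n k 1, show n - (k - 1) = n - k + 1 by ring,
    show n + 1 - k = n - k + 1 by ring, show n + 1 + k - 1 = n + k - 1 + 1 by ring,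
    show 2 * n - (k - 1) + 1 = 2 * n - k + 1 + 1 by ring,
    show 2 * (n + 1) - k = 2 * n - k + 1 + 1 by ring,
    poch_half_add_one n, poch_half_add_one (n - k), poch_half_add_one (n + k - 1)]
  simp only [div_eq_mul_inv, mul_inv, ← inv_pow]
  rw [inv_poch_one_eq n, inv_poch_one_eq (2 * n - k), inv_poch_one_eq (2 * n - k + 1)]
  push_cast
  ring

theorem wz_pair_relation (n k : ℤ) (hn : 0 ≤ n) (hk : 0 ≤ 2*n - k + 1) :
    F n (k - 1) - F n k = G (n + 1) k - G n k :=
  wz_pair_relation_general n k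
end
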